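/- Let N be a closed orientable 3-manifold and let x₁, ..., x_m ∈ H¹(N; ℤ/2) be classes such that x_i³ ≠ 0 for each i and x_i ⌣ x_j = 0 for all i ≠ j. Then x₁, ..., x_m are linearly independent over ℤ/2. -/
import Mathlib


/-- Abstract model of the ℤ/2-cohomology ring of a closed orientable 3-manifold `N`:
a graded commutative ℤ/2-algebra `B` with `H³ = 𝒜 3 ≅ ℤ/2`.  If degree-one classes
`x₁, …, x_m` satisfy `x_i³ ≠ 0` and `x_i ⌣ x_j = 0` for `i ≠ j`, then they are linearly
independent over ℤ/2. -/
theorem stmt9 (B : Type*) [CommRing B] [Algebra (ZMod 2) B]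
    (𝒜 : ℕ → Submodule (ZMod 2) B) [GradedRing 𝒜]
    (H3 : (𝒜 3) ≃ₗ[ZMod 2] ZMod 2)
    (m : ℕ) (x : Fin m → B) (hx : ∀ i, x i ∈ 𝒜 1)
    (hcube : ∀ i, x i ^ 3 ≠ 0)
    (hmul : ∀ i j, i ≠ j → x i * x j = 0) :
    LinearIndependent (ZMod 2) x := by
  rw [Fintype.linearIndependent_iff]
  intro g hg i
  by_contra h
  have hgi : g i = 1 := by
    have h2 : ∀ a : ZMod 2, a ≠ 0 → a = 1 := by decide
    exact h2 _ h
  have h0 : x i * ∑ j, g j • x j = 0 := by rw [hg, mul_zero]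
  rw [Finset.mul_sum] at h0
  rw [Finset.sum_eq_single i
    (fun j _ hj => by rw [mul_smul_comm, hmul i j (Ne.symm hj), smul_zero])
    (fun hi => absurd (Finset.mem_univ i) hi)] at h0
  rw [hgi, one_smul] at h0
  exact hcube i (by rw [pow_succ, pow_two, h0, zero_mul])
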